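/- arXiv:2602.03206 — 3 statements merged into one kernel-verified Lean document; each statement's English description precedes it below -/
import Mathlib

section
/- Let L be a Dedekind complete unital f-algebra, X a partially ordered L-module, x ∈ X with x ≥ 0, and π an idempotent of L. Then the order interval [0, πx] equals π·[0, x], i.e., {y : 0 ≤ y ≤ πx} = {πz : 0 ≤ z ≤ x}. -/
/-- A Dedekind complete unital `f`-algebra over the reals. -/
class DFAlgebra (L : Type*) extends CommRing L, Lattice L, Algebra ℝ L where
  add_le_add_left : ∀ a b : L, a ≤ b → ∀ c : L, c + a ≤ c + b
  mul_nonneg : ∀ a b : L, 0 ≤ a → 0 ≤ b → 0 ≤ a * b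
  f_prop : ∀ a b c : L, a ⊓ b = 0 → 0 ≤ c → (c * a) ⊓ b = 0
  algebraMap_nonneg : ∀ r : ℝ, 0 ≤ r → 0 ≤ algebraMap r
  dedekind : ∀ S : Set L, S.Nonempty → BddAbove S → ∃ a : L, IsLUB S a

/-- A partially ordered `L`-module. -/
class POModule (L : Type*) [DFAlgebra L] (X : Type*) extends
    AddCommGroup X, Module L X, PartialOrder X where
  add_le_add_left : ∀ a b : X, a ≤ b → ∀ c : X, c + a ≤ c + b
  smul_le_smul : ∀ l : L, 0 ≤ l → ∀ a b : X, a ≤ b → l • a ≤ l • b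

/-! Squares are positive in an `f`-algebra, since `a⁺ a⁻ = 0` for the disjoint parts of `a`;
hence an idempotent `π` and its complement `1 - π` are both positive. For `0 ≤ y ≤ π x` this
gives `0 ≤ (1 - π) y ≤ (1 - π) π x = 0`, so `y = π y` with `0 ≤ y ≤ π x ≤ x`. -/

namespace DFAlgebra

variable {L : Type*} [DFAlgebra L]

instance : AddLeftMono L :=
  ⟨fun c _ _ h => DFAlgebra.add_le_add_left _ _ h c⟩

theorem mul_eq_zero_of_inf_eq_zero {a b : L} (ha : 0 ≤ a) (hb : 0 ≤ b) (h : a ⊓ b = 0) :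
    a * b = 0 := by
  have hba : b ⊓ (b * a) = 0 := by rw [inf_comm]; exact f_prop a b b h hb
  have hab : (a * b) ⊓ (b * a) = 0 := f_prop b (b * a) a hba ha
  rwa [mul_comm b a, inf_idem] at hab

theorem mul_self_nonneg (a : L) : 0 ≤ a * a := by
  have hpn : a⁺ * a⁻ = 0 :=
    mul_eq_zero_of_inf_eq_zero (posPart_nonneg a) (negPart_nonneg a)
      (posPart_inf_negPart_eq_zero a)
  have hsq : a * a = a⁺ * a⁺ + a⁻ * a⁻ := by
    conv_lhs => rw [← posPart_sub_negPart a]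
    linear_combination (-2 : L) * hpn
  rw [hsq]
  exact add_nonneg (mul_nonneg _ _ (posPart_nonneg a) (posPart_nonneg a))
    (mul_nonneg _ _ (negPart_nonneg a) (negPart_nonneg a))

theorem nonneg_of_isIdempotentElem {π : L} (hπ : IsIdempotentElem π) : 0 ≤ π :=
  hπ.eq ▸ mul_self_nonneg π

end DFAlgebra

namespace POModule

variable {L X : Type*} [DFAlgebra L] [POModule L X]

instance : AddLeftMono X :=
  ⟨fun c _ _ h => POModule.add_le_add_left _ _ h c⟩

theorem smul_nonneg {l : L} (hl : 0 ≤ l) {y : X} (hy : 0 ≤ y) : 0 ≤ l • y := by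
  simpa using smul_le_smul l hl 0 y hy

theorem smul_le_self_of_isIdempotentElem {π : L} (hπ : IsIdempotentElem π) {x : X}
    (hx : 0 ≤ x) : π • x ≤ x := by
  have h := smul_nonneg (DFAlgebra.nonneg_of_isIdempotentElem hπ.one_sub) hx
  rwa [sub_smul, one_smul, sub_nonneg] at h

theorem smul_eq_self_of_mem_Icc {π : L} (hπ : IsIdempotentElem π) {x y : X}
    (hy : y ∈ Set.Icc 0 (π • x)) : π • y = y := by
  have hπ' := DFAlgebra.nonneg_of_isIdempotentElem hπ.one_sub
  have hle : (1 - π) • y ≤ 0 := by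
    simpa [smul_smul, sub_mul, hπ.eq] using smul_le_smul _ hπ' _ _ hy.2
  have hzero : (1 - π) • y = 0 := le_antisymm hle (smul_nonneg hπ' hy.1)
  rw [sub_smul, one_smul, sub_eq_zero] at hzero
  exact hzero.symm

end POModule

/-- For a PO L-module X, x ≥ 0 and an idempotent π, [0, π x] = π [0, x]. -/
theorem stmt2 (L X : Type*) [DFAlgebra L] [POModule L X]
    (x : X) (hx : 0 ≤ x) (π : L) (hπ : π * π = π) :
    Set.Icc (0 : X) (π • x) = (fun z => π • z) '' Set.Icc (0 : X) x := by
  have hπ0 : 0 ≤ π := DFAlgebra.nonneg_of_isIdempotentElem hπ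
  ext y
  constructor
  · intro hy
    exact ⟨y, ⟨hy.1, hy.2.trans (POModule.smul_le_self_of_isIdempotentElem hπ hx)⟩,
      POModule.smul_eq_self_of_mem_Icc hπ hy⟩
  · rintro ⟨z, ⟨hz0, hzx⟩, rfl⟩
    exact ⟨POModule.smul_nonneg hπ0 hz0, POModule.smul_le_smul π hπ0 z x hzx⟩
end

section
/- Let L be a Dedekind complete unital f-algebra and X a directed partially ordered L-module. Then X is support-attaining if and only if X is almost P-Archimedean. -/
/-- X is support-attaining: for every x, the infimum π_x of the idempotents π
with π • x = x satisfies π_x • x = x. -/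
def SupportAttaining (L X : Type*) [DFAlgebra L] [POModule L X] : Prop :=
  ∀ x : X, ∀ s : L, IsGLB {π : L | π * π = π ∧ π • x = x} s → s • x = x

/-- X is almost P-Archimedean. -/
def AlmostPArchimedean (L X : Type*) [DFAlgebra L] [POModule L X] : Prop :=
  ∀ D : Set L, (∀ π ∈ D, π * π = π) → DirectedOn (fun a b => b ≤ a) D → IsGLB D 0 →
    ∀ x : X, 0 ≤ x → ∀ y : X, (∀ π ∈ D, -(π • x) ≤ y ∧ y ≤ π • x) → y = 0

/-!
Squares in an `f`-algebra are positive, so idempotents lie between `0` and `1`. If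
`-(π • x) ≤ y ≤ π • x` for an idempotent `π`, then the positive element `1 - π` kills `π • x`
and hence `y - π • y`; so a set of idempotents decreasing to `0` and bounding `y` consists of
idempotents fixing `y`, and support attainment gives `y = 0 • y = 0`.

Conversely, the infimum `s` of the idempotents fixing `x` is an idempotent with `s π = s` for each
of them, so the idempotents `π - s` decrease to `0`. Choosing `z ≥ 0` with `-z ≤ x ≤ z` (this is
where directedness enters), `x - s • x = (π - s) • x` lies between `±(π - s) • z`, and almost
`P`-Archimedeanity forces `s • x = x`.
-/

namespace DFAlgebra

variable {L : Type*} [DFAlgebra L]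

instance : IsOrderedAddMonoid L where
  add_le_add_left a b h c := by
    simpa only [add_comm _ c] using DFAlgebra.add_le_add_left a b h c

theorem posPart_mul_negPart (a : L) : a⁺ * a⁻ = 0 := by
  -- two applications of the `f`-property make `a⁺ * a⁻` disjoint from itself
  have h : (a⁺ * a⁻) ⊓ a⁺ = 0 :=
    f_prop _ _ _ (inf_comm a⁺ a⁻ ▸ posPart_inf_negPart_eq_zero a) (posPart_nonneg a)
  have h' : (a⁻ * a⁺) ⊓ (a⁺ * a⁻) = 0 := f_prop _ _ _ (inf_comm _ a⁺ ▸ h) (negPart_nonneg a)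
  rwa [mul_comm, inf_idem] at h'

instance : ZeroLEOneClass L := ⟨by simpa using mul_self_nonneg (1 : L)⟩

instance : IsOrderedRing L := IsOrderedRing.of_mul_nonneg DFAlgebra.mul_nonneg

end DFAlgebra

section Idempotents

variable {L : Type*} [DFAlgebra L] {e f : L}

theorem IsIdempotentElem.nonneg (he : IsIdempotentElem e) : 0 ≤ e :=
  he.eq ▸ DFAlgebra.mul_self_nonneg e

theorem IsIdempotentElem.le_one (he : IsIdempotentElem e) : e ≤ 1 :=
  sub_nonneg.1 he.one_sub.nonneg

theorem IsIdempotentElem.mul_le_left (he : IsIdempotentElem e) (hf : IsIdempotentElem f) :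
    e * f ≤ e := by
  simpa using mul_le_mul_of_nonneg_left hf.le_one he.nonneg

variable {S : Set L} {s : L}

theorem IsGLB.mul_eq_left_of_isIdempotentElem (hs : IsGLB S s)
    (hS : ∀ π ∈ S, IsIdempotentElem π) {π : L} (hπ : π ∈ S) : s * π = s := by
  have hs₀ : 0 ≤ s := hs.2 fun ρ hρ => (hS ρ hρ).nonneg
  have hπ₁ : 0 ≤ 1 - π := (hS π hπ).one_sub.nonneg
  -- `0 ≤ s ≤ π` gives `0 ≤ s (1 - π) ≤ π (1 - π) = 0`
  have h : s * (1 - π) ≤ π * (1 - π) := mul_le_mul_of_nonneg_right (hs.1 hπ) hπ₁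
  rw [(hS π hπ).mul_one_sub_self] at h
  linear_combination -(le_antisymm h (mul_nonneg hs₀ hπ₁))

theorem IsGLB.isIdempotentElem (hs : IsGLB S s) (hS : ∀ π ∈ S, IsIdempotentElem π)
    (hne : S.Nonempty) : IsIdempotentElem s := by
  obtain ⟨π, hπ⟩ := hne
  have hs₀ : 0 ≤ s := hs.2 fun ρ hρ => (hS ρ hρ).nonneg
  have hs₁ : 0 ≤ 1 - s := sub_nonneg.2 ((hs.1 hπ).trans (hS π hπ).le_one)
  -- `s (1 - s) + s` is again a lower bound of `S`, because `s ρ = s` for `ρ ∈ S`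
  have hlow : s * (1 - s) + s ∈ lowerBounds S := fun ρ hρ => by
    have hρs : ρ * (1 - s) = ρ - s := by
      linear_combination -hs.mul_eq_left_of_isIdempotentElem hS hρ
    calc s * (1 - s) + s ≤ ρ * (1 - s) + s := by gcongr; exact hs.1 hρ
      _ = ρ := by rw [hρs, sub_add_cancel]
  have h : s * (1 - s) ≤ 0 := add_le_iff_nonpos_left.1 (hs.2 hlow)
  show s * s = s
  linear_combination -(le_antisymm h (mul_nonneg hs₀ hs₁))

end Idempotents

section Module

variable {L X : Type*} [DFAlgebra L] [POModule L X]

instance POModule.toIsOrderedAddMonoid : IsOrderedAddMonoid X where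
  add_le_add_left a b h c := by
    simpa only [add_comm _ c] using POModule.add_le_add_left (L := L) a b h c

instance POModule.toPosSMulMono : PosSMulMono L X :=
  ⟨fun a ha _ _ h => POModule.smul_le_smul a ha _ _ h⟩

theorem IsIdempotentElem.smul_eq_self_of_neg_le_of_le {π : L} (hπ : IsIdempotentElem π)
    {x y : X} (h₁ : -(π • x) ≤ y) (h₂ : y ≤ π • x) : π • y = y := by
  have hπ₁ : 0 ≤ 1 - π := hπ.one_sub.nonneg
  have hker : (1 - π) • π • x = 0 := by rw [smul_smul, hπ.one_sub_mul_self, zero_smul]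
  have hle : (1 - π) • y ≤ 0 := hker ▸ smul_le_smul_of_nonneg_left h₂ hπ₁
  have hge : 0 ≤ (1 - π) • y := by
    simpa only [smul_neg, hker, neg_zero] using smul_le_smul_of_nonneg_left h₁ hπ₁
  have h := le_antisymm hle hge
  rwa [sub_smul, one_smul, sub_eq_zero, eq_comm] at h

end Module

theorem exists_nonneg_neg_le_and_le {X : Type*} [AddCommGroup X] [PartialOrder X]
    [IsOrderedAddMonoid X] [IsDirectedOrder X] (x : X) : ∃ z : X, 0 ≤ z ∧ -z ≤ x ∧ x ≤ z := by
  obtain ⟨w, hxw, hxw'⟩ := directed_of (· ≤ ·) x (-x)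
  obtain ⟨z, hwz, hz⟩ := directed_of (· ≤ ·) w 0
  exact ⟨z, hz, neg_le.1 (hxw'.trans hwz), hxw.trans hwz⟩


section Support

variable {L X : Type*} [DFAlgebra L] [POModule L X]

variable (L) in
def fixingIdempotents (x : X) : Set L := {π : L | IsIdempotentElem π ∧ π • x = x}

theorem one_mem_fixingIdempotents (x : X) : (1 : L) ∈ fixingIdempotents L x :=
  ⟨IsIdempotentElem.one, one_smul L x⟩

theorem directedOn_fixingIdempotents (x : X) : DirectedOn (· ≥ ·) (fixingIdempotents L x) := by
  rintro π ⟨hπ, hπx⟩ ρ ⟨hρ, hρx⟩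
  exact ⟨π * ρ, ⟨hπ.mul hρ, by rw [mul_smul, hρx, hπx]⟩, hπ.mul_le_left hρ,
    mul_comm ρ π ▸ hρ.mul_le_left hπ⟩

theorem AlmostPArchimedean.of_supportAttaining (h : SupportAttaining L X) :
    AlmostPArchimedean L X := by
  intro D hD _ hD₀ x _ y hy
  have hfix : D ⊆ fixingIdempotents L y := fun π hπ =>
    ⟨hD π hπ, IsIdempotentElem.smul_eq_self_of_neg_le_of_le (hD π hπ) (hy π hπ).1 (hy π hπ).2⟩
  have h₀ : IsGLB (fixingIdempotents L y) 0 :=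
    hD₀.of_subset_of_superset isGLB_Ici hfix fun π hπ => hπ.1.nonneg
  simpa using (h y 0 h₀).symm

theorem SupportAttaining.of_almostPArchimedean [IsDirectedOrder X] (h : AlmostPArchimedean L X) :
    SupportAttaining L X := by
  intro x s (hs : IsGLB (fixingIdempotents L x) s)
  have hS : ∀ π ∈ fixingIdempotents L x, IsIdempotentElem π := fun π hπ => hπ.1
  have hsπ : ∀ π ∈ fixingIdempotents L x, s * π = s := fun π hπ =>
    hs.mul_eq_left_of_isIdempotentElem hS hπ
  have hs_idem : IsIdempotentElem s := hs.isIdempotentElem hS ⟨1, one_mem_fixingIdempotents x⟩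
  obtain ⟨z, hz, hzx, hxz⟩ := exists_nonneg_neg_le_and_le x
  have hD : ∀ e ∈ (· - s) '' fixingIdempotents L x, IsIdempotentElem e := by
    rintro _ ⟨π, hπ, rfl⟩
    exact hs_idem.sub (hS π hπ) (hsπ π hπ) (mul_comm π s ▸ hsπ π hπ)
  have hD₀ : IsGLB ((· - s) '' fixingIdempotents L x) 0 := by
    simpa using (OrderIso.subRight s).isGLB_image'.2 hs
  have hbound : ∀ e ∈ (· - s) '' fixingIdempotents L x,
      -(e • z) ≤ x - s • x ∧ x - s • x ≤ e • z := by
    rintro _ ⟨π, hπ, rfl⟩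
    have he : 0 ≤ π - s := sub_nonneg.2 (hs.1 hπ)
    have hex : (π - s) • x = x - s • x := by rw [sub_smul, hπ.2]
    exact ⟨hex ▸ smul_neg (π - s) z ▸ smul_le_smul_of_nonneg_left hzx he,
      hex ▸ smul_le_smul_of_nonneg_left hxz he⟩
  have hx := h _ hD ((directedOn_fixingIdempotents x).mono_comp fun _ _ => (sub_le_sub_right · s))
    hD₀ z hz _ hbound
  exact (sub_eq_zero.1 hx).symm

end Support

/-- A directed PO L-module is support-attaining iff it is almost P-Archimedean. -/
theorem stmt8 (L X : Type*) [DFAlgebra L] [POModule L X]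
    (hdir : ∀ x y : X, ∃ z : X, x ≤ z ∧ y ≤ z) :
    SupportAttaining L X ↔ AlmostPArchimedean L X :=
  have : IsDirectedOrder X := ⟨hdir⟩
  ⟨AlmostPArchimedean.of_supportAttaining, SupportAttaining.of_almostPArchimedean⟩
end

section
/- Let L be a Dedekind complete unital f-algebra, X a directed partially ordered L-module with the Riesz Decomposition Property, Y a Dedekind complete L-vector lattice which is sequentially P-Archimedean, and S : X → Y an order-bounded L-module homomorphism. Then S has a supremum S⁺ = S ∨ 0 in the partially ordered L-module of order-bounded operators from X to Y, and for every x ∈ X⁺, S⁺(x) = sup{S(y) : 0 ≤ y ≤ x}. -/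
class LVectorLattice (L : Type*) [DFAlgebra L] (X : Type*) extends
    AddCommGroup X, Module L X, Lattice X where
  add_le_add_left : ∀ a b : X, a ≤ b → ∀ c : X, c + a ≤ c + b
  smul_le_smul : ∀ l : L, 0 ≤ l → ∀ a b : X, a ≤ b → l • a ≤ l • b

section Lb

variable (L X Y : Type*) [DFAlgebra L] [POModule L X] [LVectorLattice L Y]

def OrderBounded (S : X →ₗ[L] Y) : Prop :=
  ∀ a b : X, ∃ c d : Y, ∀ z : X, a ≤ z → z ≤ b → c ≤ S z ∧ S z ≤ d

abbrev Lb := {S : X →ₗ[L] Y // OrderBounded L X Y S}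

instance : Preorder (Lb L X Y) where
  le S T := ∀ x : X, 0 ≤ x → S.1 x ≤ T.1 x
  le_refl S x _ := le_refl _
  le_trans S T U hST hTU x hx := le_trans (hST x hx) (hTU x hx)

instance : Zero (Lb L X Y) :=
  ⟨⟨0, fun _ _ => ⟨0, 0, fun z _ _ => by simp⟩⟩⟩

end Lb

open Set Pointwise

def IsDedekindComplete (G : Type*) [Preorder G] : Prop :=
  ∀ S : Set G, S.Nonempty → BddAbove S → ∃ a : G, IsLUB S a

theorem nonpos_of_forall_nsmul_le {G : Type*} [AddCommGroup G] [PartialOrder G]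
    [IsOrderedAddMonoid G] (hded : IsDedekindComplete G) {a b : G}
    (h : ∀ n : ℕ, n • a ≤ b) : a ≤ 0 := by
  obtain ⟨u, hu⟩ := hded (range fun n : ℕ => n • a) (range_nonempty _)
    ⟨b, forall_mem_range.2 h⟩
  have hua : u + a ≤ u := by
    rw [← le_sub_iff_add_le]
    refine hu.2 (forall_mem_range.2 fun n => ?_)
    rw [le_sub_iff_add_le, ← succ_nsmul]
    exact hu.1 (mem_range_self (n + 1))
  simpa using hua

section LatticeGroup

variable {G : Type*} [Lattice G] [AddCommGroup G] [IsOrderedAddMonoid G]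

theorem inf_add_eq_zero {x a b : G} (hx : 0 ≤ x) (ha : 0 ≤ a) (hb : 0 ≤ b)
    (hxa : x ⊓ a = 0) (hxb : x ⊓ b = 0) : x ⊓ (a + b) = 0 := by
  refine le_antisymm ?_ (le_inf hx (add_nonneg ha hb))
  have hle : ∀ c, 0 ≤ c → x ⊓ (a + b) ≤ x + c := fun c hc =>
    inf_le_left.trans (le_add_of_nonneg_right hc)
  calc x ⊓ (a + b)
      ≤ (x + x) ⊓ (x + b) ⊓ ((a + x) ⊓ (a + b)) :=
        le_inf (le_inf (hle x hx) (hle b hb))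
          (le_inf ((hle a ha).trans_eq (add_comm x a)) inf_le_right)
    _ = x ⊓ a + x ⊓ b := by rw [inf_add, add_inf, add_inf]
    _ = 0 := by rw [hxa, hxb, add_zero]

theorem inf_nsmul_eq_zero {x a : G} (hx : 0 ≤ x) (ha : 0 ≤ a) (h : x ⊓ a = 0) (n : ℕ) :
    x ⊓ n • a = 0 := by
  induction n with
  | zero => simpa using inf_eq_right.2 hx
  | succ n ih => rw [succ_nsmul]; exact inf_add_eq_zero hx (nsmul_nonneg ha n) ha ih h

theorem IsLUB.image_inf_left {s : Set G} {a : G} (h : IsLUB s a) (x : G) :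
    IsLUB ((x ⊓ ·) '' s) (x ⊓ a) := by
  refine ⟨forall_mem_image.2 fun t ht => inf_le_inf_left x (h.1 ht), fun u hu => ?_⟩
  have ha : a ≤ u + x ⊔ a - x := h.2 fun t ht => by
    calc t = x ⊓ t + x ⊔ t - x := by rw [inf_add_sup]; abel
      _ ≤ u + x ⊔ a - x := by
        gcongr
        exacts [hu (mem_image_of_mem _ ht), h.1 ht]
  calc x ⊓ a = x + a - x ⊔ a := by rw [← inf_add_sup x a]; abel
    _ ≤ x + (u + x ⊔ a - x) - x ⊔ a := by gcongr
    _ = u := by abel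

end LatticeGroup

section FAlgebra

variable {L : Type*} [DFAlgebra L]

instance : IsOrderedAddMonoid L where
  add_le_add_left a b h c := by
    simpa only [add_comm c] using DFAlgebra.add_le_add_left a b h c

theorem DFAlgebra.mul_eq_zero_of_inf_eq_zero_s15 {a b : L} (ha : 0 ≤ a) (hb : 0 ≤ b)
    (h : a ⊓ b = 0) : a * b = 0 := by
  have hba : b ⊓ b * a = 0 := by rw [inf_comm]; exact DFAlgebra.f_prop a b b h hb
  simpa [mul_comm b a] using DFAlgebra.f_prop b (b * a) a hba ha

theorem DFAlgebra.mul_self_nonneg_s15 (a : L) : 0 ≤ a * a := by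
  have h : a * a = a⁺ * a⁺ + a⁻ * a⁻ - 2 * (a⁺ * a⁻) := by
    conv_lhs => rw [← posPart_sub_negPart a]
    ring
  rw [h, DFAlgebra.mul_eq_zero_of_inf_eq_zero_s15 (posPart_nonneg a) (negPart_nonneg a)
    (posPart_inf_negPart_eq_zero a), mul_zero, sub_zero]
  exact add_nonneg (DFAlgebra.mul_nonneg _ _ (posPart_nonneg a) (posPart_nonneg a))
    (DFAlgebra.mul_nonneg _ _ (negPart_nonneg a) (negPart_nonneg a))

instance : ZeroLEOneClass L := ⟨by simpa using DFAlgebra.mul_self_nonneg_s15 (1 : L)⟩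

instance : IsOrderedRing L := .of_mul_nonneg DFAlgebra.mul_nonneg

theorem DFAlgebra.algebraMap_mono : Monotone (algebraMap ℝ L) := fun r s h => by
  simpa using DFAlgebra.algebraMap_nonneg (L := L) (s - r) (sub_nonneg.2 h)

theorem IsIdempotentElem.nonneg_s15 {q : L} (hq : IsIdempotentElem q) : 0 ≤ q :=
  hq.eq ▸ DFAlgebra.mul_self_nonneg_s15 q

theorem IsIdempotentElem.le_one_s15 {q : L} (hq : IsIdempotentElem q) : q ≤ 1 :=
  sub_nonneg.1 hq.one_sub.nonneg_s15

theorem IsIdempotentElem.mul_eq_left_of_le {p q : L} (hp : IsIdempotentElem p)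
    (hq : IsIdempotentElem q) (hpq : p ≤ q) : p * q = p := by
  have h : p * (1 - q) = 0 := le_antisymm
    ((mul_le_mul_of_nonneg_right hpq hq.one_sub.nonneg_s15).trans_eq hq.mul_one_sub_self)
    (mul_nonneg hp.nonneg_s15 hq.one_sub.nonneg_s15)
  rwa [mul_sub, mul_one, sub_eq_zero, eq_comm] at h

end FAlgebra

section SupportIdem

variable {L : Type*} [DFAlgebra L]

theorem exists_isLUB_one_inf_nsmul (a : L) : ∃ e, IsLUB (range fun n : ℕ => 1 ⊓ n • a) e :=
  DFAlgebra.dedekind _ (range_nonempty _) ⟨1, forall_mem_range.2 fun _ => inf_le_left⟩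

/-- The component of `1` in the band generated by `a`. -/
noncomputable def supportIdem (a : L) : L := (exists_isLUB_one_inf_nsmul a).choose

theorem isLUB_supportIdem (a : L) :
    IsLUB (range fun n : ℕ => 1 ⊓ n • a) (supportIdem a) :=
  (exists_isLUB_one_inf_nsmul a).choose_spec

theorem supportIdem_nonneg (a : L) : 0 ≤ supportIdem a := by
  simpa using (isLUB_supportIdem a).1 (mem_range_self 0)

theorem supportIdem_le_one (a : L) : supportIdem a ≤ 1 :=
  (isLUB_supportIdem a).2 (forall_mem_range.2 fun _ => inf_le_left)

theorem supportIdem_mono {a b : L} (hab : a ≤ b) : supportIdem a ≤ supportIdem b :=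
  (isLUB_supportIdem a).2 <| forall_mem_range.2 fun n =>
    (inf_le_inf_left 1 (nsmul_le_nsmul_right hab n)).trans
      ((isLUB_supportIdem b).1 (mem_range_self n))

theorem inf_supportIdem_eq_zero {a x : L} (ha : 0 ≤ a) (hx : 0 ≤ x) (h : x ⊓ a = 0) :
    x ⊓ supportIdem a = 0 :=
  le_antisymm (((isLUB_supportIdem a).image_inf_left x).2 <| forall_mem_image.2 <|
      forall_mem_range.2 fun n =>
        (inf_le_inf_left x inf_le_right).trans_eq (inf_nsmul_eq_zero hx ha h n))
    (le_inf hx (supportIdem_nonneg a))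

theorem one_sub_supportIdem_inf_eq_zero {a : L} (ha : 0 ≤ a) : (1 - supportIdem a) ⊓ a = 0 := by
  set c := (1 - supportIdem a) ⊓ a
  have hc : 0 ≤ c := le_inf (sub_nonneg.2 (supportIdem_le_one a)) ha
  refine le_antisymm (nonpos_of_forall_nsmul_le (b := 1) DFAlgebra.dedekind fun n => ?_) hc
  induction n with
  | zero => simp
  | succ n ih =>
    have hn : n • c ≤ supportIdem a :=
      (le_inf ih (nsmul_le_nsmul_right inf_le_right n)).trans
        ((isLUB_supportIdem a).1 (mem_range_self n))
    calc (n + 1) • c = n • c + c := succ_nsmul c n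
      _ ≤ supportIdem a + (1 - supportIdem a) := add_le_add hn inf_le_left
      _ = 1 := add_sub_cancel _ _

theorem isIdempotentElem_supportIdem {a : L} (ha : 0 ≤ a) : IsIdempotentElem (supportIdem a) :=
  isIdempotentElem_iff_one_sub_mul_self.2 <|
    DFAlgebra.mul_eq_zero_of_inf_eq_zero_s15 (sub_nonneg.2 (supportIdem_le_one a))
      (supportIdem_nonneg a) <|
      inf_supportIdem_eq_zero ha (sub_nonneg.2 (supportIdem_le_one a))
        (one_sub_supportIdem_inf_eq_zero ha)

end SupportIdem

section Spectral

variable {L : Type*} [DFAlgebra L] {l : L}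

/-- The spectral idempotent of `l` on `{l > r}`. -/
noncomputable def spectralIdem (l : L) (r : ℝ) : L := supportIdem (l - algebraMap ℝ L r)⁺

theorem isIdempotentElem_spectralIdem (l : L) (r : ℝ) : IsIdempotentElem (spectralIdem l r) :=
  isIdempotentElem_supportIdem (posPart_nonneg _)

theorem spectralIdem_antitone (l : L) : Antitone (spectralIdem l) := fun _ _ h =>
  supportIdem_mono (posPart_mono (sub_le_sub_left (DFAlgebra.algebraMap_mono h) l))

theorem spectralIdem_mul_of_le (l : L) {r s : ℝ} (hrs : r ≤ s) :
    spectralIdem l s * spectralIdem l r = spectralIdem l s :=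
  (isIdempotentElem_spectralIdem l s).mul_eq_left_of_le (isIdempotentElem_spectralIdem l r)
    (spectralIdem_antitone l hrs)

theorem spectralIdem_mul_sub_nonneg (l : L) (r : ℝ) :
    0 ≤ spectralIdem l r * (l - algebraMap ℝ L r) := by
  set d := l - algebraMap ℝ L r
  have hd : spectralIdem l r * d⁻ = 0 := by
    rw [mul_comm]
    exact DFAlgebra.mul_eq_zero_of_inf_eq_zero_s15 (negPart_nonneg d) (supportIdem_nonneg _)
      (inf_supportIdem_eq_zero (posPart_nonneg d) (negPart_nonneg d)
        (by rw [inf_comm]; exact posPart_inf_negPart_eq_zero d))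
  rw [← posPart_sub_negPart d, mul_sub, hd, sub_zero]
  exact mul_nonneg (supportIdem_nonneg _) (posPart_nonneg d)

theorem one_sub_spectralIdem_mul_sub_nonpos (l : L) (r : ℝ) :
    (1 - spectralIdem l r) * (l - algebraMap ℝ L r) ≤ 0 := by
  set d := l - algebraMap ℝ L r
  have hd : (1 - spectralIdem l r) * d⁺ = 0 :=
    DFAlgebra.mul_eq_zero_of_inf_eq_zero_s15 (sub_nonneg.2 (supportIdem_le_one _))
      (posPart_nonneg d) (one_sub_supportIdem_inf_eq_zero (posPart_nonneg d))
  rw [← posPart_sub_negPart d, mul_sub, hd, zero_sub, neg_nonpos]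
  exact mul_nonneg (isIdempotentElem_spectralIdem l r).one_sub.nonneg_s15 (negPart_nonneg d)

theorem spectralIdem_zero_mul (hl : 0 ≤ l) : spectralIdem l 0 * l = l := by
  have he : spectralIdem l 0 = supportIdem l := by simp [spectralIdem, hl]
  have h := DFAlgebra.mul_eq_zero_of_inf_eq_zero_s15 (sub_nonneg.2 (supportIdem_le_one l)) hl
    (one_sub_supportIdem_inf_eq_zero hl)
  rwa [sub_mul, one_mul, sub_eq_zero, eq_comm, ← he] at h

theorem isGLB_spectralIdem_natCast (hl : 0 ≤ l) :
    IsGLB (range fun n : ℕ => spectralIdem l n) 0 := by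
  refine ⟨forall_mem_range.2 fun n => (isIdempotentElem_spectralIdem l n).nonneg_s15,
    fun c hc => (le_posPart c).trans (nonpos_of_forall_nsmul_le (b := l) DFAlgebra.dedekind ?_)⟩
  intro n
  have hcn : c⁺ ≤ spectralIdem l n :=
    sup_le (hc (mem_range_self n)) (isIdempotentElem_spectralIdem l n).nonneg_s15
  calc n • c⁺ ≤ n • spectralIdem l n := nsmul_le_nsmul_right hcn n
    _ = spectralIdem l n * algebraMap ℝ L n := by rw [map_natCast, nsmul_eq_mul, mul_comm]
    _ ≤ spectralIdem l n * l := by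
        simpa [mul_sub, sub_nonneg] using spectralIdem_mul_sub_nonneg l n
    _ ≤ l := mul_le_of_le_one_left hl (isIdempotentElem_spectralIdem l n).le_one_s15

theorem algebraMap_mul_sub_spectralIdem_le (l : L) {r s : ℝ} (hrs : r ≤ s) :
    algebraMap ℝ L r * (spectralIdem l r - spectralIdem l s) ≤
      (spectralIdem l r - spectralIdem l s) * l := by
  set d := spectralIdem l r - spectralIdem l s
  have hd : d * spectralIdem l r = d := by
    rw [sub_mul, (isIdempotentElem_spectralIdem l r).eq, spectralIdem_mul_of_le l hrs]
  have h := mul_nonneg (sub_nonneg.2 (spectralIdem_antitone l hrs))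
    (spectralIdem_mul_sub_nonneg l r)
  rwa [← mul_assoc, hd, mul_sub, sub_nonneg, mul_comm d] at h

theorem sub_spectralIdem_mul_le (l : L) {r s : ℝ} (hrs : r ≤ s) :
    (spectralIdem l r - spectralIdem l s) * l ≤
      algebraMap ℝ L s * (spectralIdem l r - spectralIdem l s) := by
  set d := spectralIdem l r - spectralIdem l s
  have hd : d * (1 - spectralIdem l s) = d := by
    rw [mul_sub, mul_one, sub_mul, (isIdempotentElem_spectralIdem l s).eq, mul_comm,
      spectralIdem_mul_of_le l hrs, sub_self, sub_zero]
  have h := mul_nonpos_of_nonneg_of_nonpos (sub_nonneg.2 (spectralIdem_antitone l hrs))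
    (one_sub_spectralIdem_mul_sub_nonpos l s)
  rwa [← mul_assoc, hd, mul_sub, sub_nonpos, mul_comm d (algebraMap ℝ L s)] at h

end Spectral

section Freudenthal

variable {L : Type*} [DFAlgebra L] {l : L}

def stepElements (L : Type*) [DFAlgebra L] : Subsemiring L :=
  Subsemiring.closure ({q | IsIdempotentElem q} ∪ algebraMap ℝ L '' Ici 0)

/-- The lower Riemann–Stieltjes sum of `l` along the partition `0, δ, 2δ, …, Nδ`. -/
noncomputable def freudenthalSum (l : L) (δ : ℝ) (N : ℕ) : L :=
  ∑ k ∈ Finset.range N, algebraMap ℝ L (k * δ) *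
    (spectralIdem l (k * δ) - spectralIdem l (↑(k + 1) * δ))

theorem freudenthalSum_mem_stepElements (l : L) {δ : ℝ} (hδ : 0 ≤ δ) (N : ℕ) :
    freudenthalSum l δ N ∈ stepElements L :=
  Subsemiring.sum_mem _ fun k _ => Subsemiring.mul_mem _
    (Subsemiring.subset_closure (Or.inr ⟨_, mem_Ici.2 (by positivity), rfl⟩))
    (Subsemiring.subset_closure (Or.inl <|
      (isIdempotentElem_spectralIdem l _).sub (isIdempotentElem_spectralIdem l _)
        (spectralIdem_mul_of_le l (by gcongr; simp))
        (by rw [mul_comm]; exact spectralIdem_mul_of_le l (by gcongr; simp))))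

theorem sum_sub_spectralIdem (l : L) (δ : ℝ) (N : ℕ) :
    ∑ k ∈ Finset.range N, (spectralIdem l (k * δ) - spectralIdem l (↑(k + 1) * δ)) =
      spectralIdem l 0 - spectralIdem l (N * δ) := by
  simpa using Finset.sum_range_sub' (fun k : ℕ => spectralIdem l (k * δ)) N

theorem sum_sub_spectralIdem_mul_add (hl : 0 ≤ l) (δ : ℝ) (N : ℕ) :
    ∑ k ∈ Finset.range N, (spectralIdem l (k * δ) - spectralIdem l (↑(k + 1) * δ)) * l +
      spectralIdem l (N * δ) * l = l := by
  rw [← Finset.sum_mul, sum_sub_spectralIdem, sub_mul, sub_add_cancel, spectralIdem_zero_mul hl]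

theorem freudenthalSum_le (hl : 0 ≤ l) {δ : ℝ} (hδ : 0 ≤ δ) (N : ℕ) :
    freudenthalSum l δ N ≤ l :=
  calc freudenthalSum l δ N
      ≤ ∑ k ∈ Finset.range N, (spectralIdem l (k * δ) - spectralIdem l (↑(k + 1) * δ)) * l :=
        Finset.sum_le_sum fun k _ => algebraMap_mul_sub_spectralIdem_le l (by gcongr; simp)
    _ ≤ ∑ k ∈ Finset.range N, (spectralIdem l (k * δ) - spectralIdem l (↑(k + 1) * δ)) * l +
          spectralIdem l (N * δ) * l :=
        le_add_of_nonneg_right (mul_nonneg (isIdempotentElem_spectralIdem l _).nonneg_s15 hl)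
    _ = l := sum_sub_spectralIdem_mul_add hl δ N

theorem le_freudenthalSum_add (hl : 0 ≤ l) {δ : ℝ} (hδ : 0 ≤ δ) (N : ℕ) :
    l ≤ freudenthalSum l δ N + algebraMap ℝ L δ + spectralIdem l (N * δ) * l := by
  have hstep (k : ℕ) :
      algebraMap ℝ L (↑(k + 1) * δ) = algebraMap ℝ L (k * δ) + algebraMap ℝ L δ := by
    rw [← map_add]; push_cast; ring
  calc l = ∑ k ∈ Finset.range N, (spectralIdem l (k * δ) - spectralIdem l (↑(k + 1) * δ)) * l +
          spectralIdem l (N * δ) * l := (sum_sub_spectralIdem_mul_add hl δ N).symm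
    _ ≤ ∑ k ∈ Finset.range N, algebraMap ℝ L (↑(k + 1) * δ) *
          (spectralIdem l (k * δ) - spectralIdem l (↑(k + 1) * δ)) + spectralIdem l (N * δ) * l :=
        add_le_add (Finset.sum_le_sum fun k _ => sub_spectralIdem_mul_le l (by gcongr; simp)) le_rfl
    _ = freudenthalSum l δ N + algebraMap ℝ L δ * (spectralIdem l 0 - spectralIdem l (N * δ)) +
          spectralIdem l (N * δ) * l := by
        simp only [hstep, add_mul, Finset.sum_add_distrib, ← Finset.mul_sum, sum_sub_spectralIdem,
          freudenthalSum]
    _ ≤ freudenthalSum l δ N + algebraMap ℝ L δ + spectralIdem l (N * δ) * l := by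
        gcongr
        exact mul_le_of_le_one_right (DFAlgebra.algebraMap_nonneg δ hδ)
          ((sub_le_self _ (isIdempotentElem_spectralIdem l _).nonneg_s15).trans
            (isIdempotentElem_spectralIdem l 0).le_one_s15)

theorem exists_mem_stepElements_approx (hl : 0 ≤ l) (r : ℝ) {δ : ℝ} (hδ : 0 < δ) :
    ∃ s ∈ stepElements L, s ≤ l ∧ l ≤ s + algebraMap ℝ L δ + spectralIdem l r * l := by
  set N := ⌈r / δ⌉₊
  refine ⟨freudenthalSum l δ N, freudenthalSum_mem_stepElements l hδ.le N,
    freudenthalSum_le hl hδ.le N, (le_freudenthalSum_add hl hδ.le N).trans ?_⟩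
  gcongr
  exact spectralIdem_antitone l ((div_le_iff₀ hδ).1 (Nat.le_ceil _))

end Freudenthal

section Modules

variable {L : Type*} [DFAlgebra L]

instance {X : Type*} [POModule L X] : IsOrderedAddMonoid X where
  add_le_add_left a b h c := by simpa only [add_comm c] using POModule.add_le_add_left a b h c

instance {X : Type*} [POModule L X] : PosSMulMono L X :=
  ⟨fun l hl a b hab => POModule.smul_le_smul l hl a b hab⟩

instance {Y : Type*} [LVectorLattice L Y] : IsOrderedAddMonoid Y where
  add_le_add_left a b h c := by simpa only [add_comm c] using LVectorLattice.add_le_add_left a b h c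

instance {Y : Type*} [LVectorLattice L Y] : PosSMulMono L Y :=
  ⟨fun l hl a b hab => LVectorLattice.smul_le_smul l hl a b hab⟩

end Modules

section Archimedean

variable {L Y : Type*} [DFAlgebra L] [LVectorLattice L Y]

theorem le_of_forall_le_add_algebraMap_smul (hded : IsDedekindComplete Y) {a b w : Y}
    (hw : 0 ≤ w) (h : ∀ δ : ℝ, 0 < δ → a ≤ b + algebraMap ℝ L δ • w) : a ≤ b := by
  refine sub_nonpos.1 (nonpos_of_forall_nsmul_le hded (b := w) fun n => ?_)
  rcases Nat.eq_zero_or_pos n with rfl | hn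
  · simpa using hw
  have hn' : (n : ℝ) ≠ 0 := by positivity
  calc n • (a - b) ≤ n • (algebraMap ℝ L (n : ℝ)⁻¹ • w) :=
        nsmul_le_nsmul_right (sub_le_iff_le_add'.2 (h _ (by positivity))) n
    _ = w := by
        rw [← Nat.cast_smul_eq_nsmul L, smul_smul, ← map_natCast (algebraMap ℝ L), ← map_mul,
          mul_inv_cancel₀ hn', map_one, one_smul]

end Archimedean

def HasRDP (X : Type*) [AddCommGroup X] [PartialOrder X] : Prop :=
  ∀ x y : X, 0 ≤ x → 0 ≤ y → Icc (0 : X) (x + y) = Icc (0 : X) x + Icc (0 : X) y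

def IsSeqPArchimedean (L Y : Type*) [DFAlgebra L] [LVectorLattice L Y] : Prop :=
  ∀ π : ℕ → L, (∀ n, π n * π n = π n) → Antitone π →
    IsGLB (Set.range π) 0 → ∀ y : Y, 0 ≤ y → IsGLB (Set.range fun n => π n • y) 0

section IntervalSup

variable {L X Y : Type*} [DFAlgebra L] [POModule L X] [LVectorLattice L Y]

def IsIntervalSup (S : X →ₗ[L] Y) (p : X → Y) : Prop :=
  ∀ x : X, 0 ≤ x → IsLUB (S '' Icc 0 x) (p x)

theorem exists_isIntervalSup (hded : IsDedekindComplete Y) {S : X →ₗ[L] Y}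
    (hS : OrderBounded L X Y S) : ∃ p, IsIntervalSup S p := by
  have h (x : X) : ∃ y, 0 ≤ x → IsLUB (S '' Icc 0 x) y := by
    by_cases hx : 0 ≤ x
    · obtain ⟨c, d, hcd⟩ := hS 0 x
      obtain ⟨y, hy⟩ := hded _ ((nonempty_Icc.2 hx).image S)
        ⟨d, forall_mem_image.2 fun z hz => (hcd z hz.1 hz.2).2⟩
      exact ⟨y, fun _ => hy⟩
    · exact ⟨0, fun h => absurd h hx⟩
  choose p hp using h
  exact ⟨p, hp⟩

namespace IsIntervalSup

variable {S : X →ₗ[L] Y} {p : X → Y} {x : X}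

theorem nonneg_s15 (hp : IsIntervalSup S p) (hx : 0 ≤ x) : 0 ≤ p x :=
  (hp x hx).1 ⟨0, ⟨le_rfl, hx⟩, map_zero S⟩

theorem map_zero (hp : IsIntervalSup S p) : p 0 = 0 :=
  (hp 0 le_rfl).unique (by simp)

theorem mono (hp : IsIntervalSup S p) (hx : 0 ≤ x) {y : X} (hxy : x ≤ y) : p x ≤ p y :=
  (hp x hx).mono (hp y (hx.trans hxy)) (image_mono (Icc_subset_Icc_right hxy))

theorem map_add (hp : IsIntervalSup S p) (hRDP : HasRDP X) (hx : 0 ≤ x) {y : X} (hy : 0 ≤ y) :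
    p (x + y) = p x + p y :=
  (hp _ (add_nonneg hx hy)).unique <| by
    rw [hRDP x y hx hy, image_add]
    exact (hp x hx).add (hp y hy)

theorem le_apply (hp : IsIntervalSup S p) {T : X →ₗ[L] Y} (hST : ∀ y, 0 ≤ y → S y ≤ T y)
    (hT : ∀ y, 0 ≤ y → 0 ≤ T y) (hx : 0 ≤ x) : p x ≤ T x :=
  (hp x hx).2 <| forall_mem_image.2 fun y hy =>
    (hST y hy.1).trans (sub_nonneg.1 (by simpa using hT (x - y) (sub_nonneg.2 hy.2)))

theorem map_smul_le_of_mul_eq_one (hp : IsIntervalSup S p) {c c' : L} (hc : 0 ≤ c)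
    (hc' : 0 ≤ c') (h : c * c' = 1) (hx : 0 ≤ x) : p (c • x) ≤ c • p x := by
  refine (hp _ (smul_nonneg hc hx)).2 (forall_mem_image.2 fun z hz => ?_)
  have hz' : c' • z ∈ Icc 0 x := ⟨smul_nonneg hc' hz.1, by
    simpa [smul_smul, mul_comm c', h] using smul_le_smul_of_nonneg_left hz.2 hc'⟩
  calc S z = c • S (c' • z) := by rw [map_smul, smul_smul, h, one_smul]
    _ ≤ c • p x := smul_le_smul_of_nonneg_left ((hp x hx).1 (mem_image_of_mem S hz')) hc

theorem map_smul_of_mul_eq_one (hp : IsIntervalSup S p) {c c' : L} (hc : 0 ≤ c)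
    (hc' : 0 ≤ c') (h : c * c' = 1) (hx : 0 ≤ x) : p (c • x) = c • p x := by
  refine le_antisymm (hp.map_smul_le_of_mul_eq_one hc hc' h hx) ?_
  have := hp.map_smul_le_of_mul_eq_one hc' hc (by rw [mul_comm, h]) (smul_nonneg hc hx)
  rw [smul_smul, mul_comm, h, one_smul] at this
  simpa [smul_smul, h] using smul_le_smul_of_nonneg_left this hc

theorem map_algebraMap_smul (hp : IsIntervalSup S p) {r : ℝ} (hr : 0 ≤ r) (hx : 0 ≤ x) :
    p (algebraMap ℝ L r • x) = algebraMap ℝ L r • p x := by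
  rcases hr.eq_or_lt with rfl | hr
  · simp [hp.map_zero]
  exact hp.map_smul_of_mul_eq_one (DFAlgebra.algebraMap_nonneg r hr.le)
    (DFAlgebra.algebraMap_nonneg r⁻¹ (inv_nonneg.2 hr.le))
    (by rw [← map_mul, mul_inv_cancel₀ hr.ne', map_one]) hx

theorem map_idem_smul (hp : IsIntervalSup S p) {q : L} (hq : IsIdempotentElem q) (hx : 0 ≤ x) :
    p (q • x) = q • p x := by
  have hqx : 0 ≤ q • x := smul_nonneg hq.nonneg_s15 hx
  refine le_antisymm ((hp _ hqx).2 (forall_mem_image.2 fun z hz => ?_)) ?_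
  · -- `(1 - q) z` lies in `[0, (1 - q) q x] = {0}`, so `z = q z`
    have hqz : (1 - q) • z = 0 := le_antisymm
      (by simpa [smul_smul, hq.one_sub_mul_self] using
        smul_le_smul_of_nonneg_left hz.2 hq.one_sub.nonneg_s15)
      (smul_nonneg hq.one_sub.nonneg_s15 hz.1)
    rw [sub_smul, one_smul, sub_eq_zero] at hqz
    rw [hqz, map_smul]
    exact smul_le_smul_of_nonneg_left ((hp x hx).1 (mem_image_of_mem S
      ⟨hz.1, hz.2.trans (smul_le_of_le_one_left hx hq.le_one_s15)⟩)) hq.nonneg_s15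
  · have h : p x ≤ p (q • x) + (1 - q) • p x := (hp x hx).2 <| forall_mem_image.2 fun y hy => by
      calc S y = S (q • y) + (1 - q) • S y := by rw [map_smul, sub_smul, one_smul, add_sub_cancel]
        _ ≤ p (q • x) + (1 - q) • p x := add_le_add
          ((hp _ hqx).1 (mem_image_of_mem S ⟨smul_nonneg hq.nonneg_s15 hy.1,
            smul_le_smul_of_nonneg_left hy.2 hq.nonneg_s15⟩))
          (smul_le_smul_of_nonneg_left ((hp x hx).1 (mem_image_of_mem S hy)) hq.one_sub.nonneg_s15)
    rwa [sub_smul, one_smul, add_sub, le_sub_iff_add_le, add_comm (p x),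
      add_le_add_iff_right] at h

theorem map_smul_of_mem_stepElements (hp : IsIntervalSup S p) (hRDP : HasRDP X) {s : L}
    (hs : s ∈ stepElements L) : 0 ≤ s ∧ ∀ x, 0 ≤ x → p (s • x) = s • p x := by
  induction hs using Subsemiring.closure_induction with
  | mem q hq =>
    rcases hq with hq | ⟨r, hr, rfl⟩
    · exact ⟨hq.nonneg_s15, fun x hx => hp.map_idem_smul hq hx⟩
    · exact ⟨DFAlgebra.algebraMap_nonneg r hr, fun x hx => hp.map_algebraMap_smul hr hx⟩
  | zero => exact ⟨le_rfl, fun x _ => by simp [hp.map_zero]⟩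
  | one => exact ⟨zero_le_one, fun x _ => by simp⟩
  | add a b _ _ ha hb =>
    refine ⟨add_nonneg ha.1 hb.1, fun x hx => ?_⟩
    rw [add_smul, hp.map_add hRDP (smul_nonneg ha.1 hx) (smul_nonneg hb.1 hx), ha.2 x hx,
      hb.2 x hx, add_smul]
  | mul a b _ _ ha hb =>
    refine ⟨mul_nonneg ha.1 hb.1, fun x hx => ?_⟩
    rw [mul_smul, ha.2 _ (smul_nonneg hb.1 hx), hb.2 x hx, mul_smul]

theorem map_smul (hp : IsIntervalSup S p) (hRDP : HasRDP X) (hded : IsDedekindComplete Y)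
    (hparch : IsSeqPArchimedean L Y) {l : L} (hl : 0 ≤ l) (hx : 0 ≤ x) :
    p (l • x) = l • p x := by
  set π : ℕ → L := fun n => spectralIdem l n
  have hlx : 0 ≤ l • x := smul_nonneg hl hx
  have key {u v : Y} (hu : 0 ≤ u)
      (h : ∀ (n : ℕ) (δ : ℝ), 0 < δ → u ≤ v + algebraMap ℝ L δ • p x + π n • u) : u ≤ v := by
    refine sub_nonpos.1 ((hparch π (fun n => isIdempotentElem_spectralIdem l n)
      (fun m n hmn => spectralIdem_antitone l (Nat.cast_le.2 hmn))
      (isGLB_spectralIdem_natCast hl) u hu).2 (forall_mem_range.2 fun n => ?_))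
    refine le_of_forall_le_add_algebraMap_smul hded (hp.nonneg_s15 hx) fun δ hδ => ?_
    rw [sub_le_iff_le_add', ← add_assoc, add_right_comm]
    exact h n δ hδ
  refine le_antisymm (key (hp.nonneg_s15 hlx) fun n δ hδ => ?_)
    (key (smul_nonneg hl (hp.nonneg_s15 hx)) fun n δ hδ => ?_)
  all_goals
    obtain ⟨s, hs, hsl, hls⟩ := exists_mem_stepElements_approx hl n hδ
    obtain ⟨hs0, hps⟩ := hp.map_smul_of_mem_stepElements hRDP hs
    have hδ0 : 0 ≤ algebraMap ℝ L δ := DFAlgebra.algebraMap_nonneg δ hδ.le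
    have hπ0 : 0 ≤ π n := (isIdempotentElem_spectralIdem l n).nonneg_s15
  · calc p (l • x) ≤ p ((s + algebraMap ℝ L δ + π n * l) • x) :=
          hp.mono hlx (smul_le_smul_of_nonneg_right hls hx)
      _ = s • p x + algebraMap ℝ L δ • p x + π n • p (l • x) := by
          rw [add_smul, add_smul, hp.map_add hRDP (add_nonneg (smul_nonneg hs0 hx)
            (smul_nonneg hδ0 hx)) (smul_nonneg (mul_nonneg hπ0 hl) hx),
            hp.map_add hRDP (smul_nonneg hs0 hx)
            (smul_nonneg hδ0 hx), hps x hx, hp.map_algebraMap_smul hδ.le hx, mul_smul,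
            hp.map_idem_smul (isIdempotentElem_spectralIdem l n) hlx]
      _ ≤ l • p x + algebraMap ℝ L δ • p x + π n • p (l • x) := by
          gcongr
          exact hp.nonneg_s15 hx
  · calc l • p x ≤ (s + algebraMap ℝ L δ + π n * l) • p x :=
          smul_le_smul_of_nonneg_right hls (hp.nonneg_s15 hx)
      _ = p (s • x) + algebraMap ℝ L δ • p x + π n • (l • p x) := by
          rw [add_smul, add_smul, hps x hx, mul_smul]
      _ ≤ p (l • x) + algebraMap ℝ L δ • p x + π n • (l • p x) := by
          gcongr
          exact hp.mono (smul_nonneg hs0 hx) (smul_le_smul_of_nonneg_right hsl hx)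

end IsIntervalSup

end IntervalSup

theorem exists_linearMap_eq_of_nonneg {L X Y : Type*} [DFAlgebra L] [POModule L X]
    [AddCommGroup Y] [Module L Y] (hdir : ∀ x : X, ∃ a b : X, 0 ≤ a ∧ 0 ≤ b ∧ x = a - b)
    {f : X → Y} (hadd : ∀ x y : X, 0 ≤ x → 0 ≤ y → f (x + y) = f x + f y)
    (hsmul : ∀ l : L, 0 ≤ l → ∀ x : X, 0 ≤ x → f (l • x) = l • f x) :
    ∃ R : X →ₗ[L] Y, ∀ x, 0 ≤ x → R x = f x := by
  choose A B hA hB hAB using hdir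
  have hf0 : f 0 = 0 := by simpa using hadd 0 0 le_rfl le_rfl
  let R₀ : X → Y := fun x => f (A x) - f (B x)
  have hR₀ {x a b : X} (ha : 0 ≤ a) (hb : 0 ≤ b) (hx : x = a - b) : R₀ x = f a - f b := by
    rw [sub_eq_sub_iff_add_eq_add, ← hadd _ _ (hA x) hb, ← hadd _ _ ha (hB x)]
    rw [hAB x, sub_eq_sub_iff_add_eq_add] at hx
    rw [hx]
  let R₁ : X →+ Y := AddMonoidHom.mk' R₀ fun x y => by
    rw [hR₀ (add_nonneg (hA x) (hA y)) (add_nonneg (hB x) (hB y))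
      (by rw [add_sub_add_comm, ← hAB x, ← hAB y]), hadd _ _ (hA x) (hA y),
      hadd _ _ (hB x) (hB y)]
    simp only [R₀]
    abel
  have hR₁ {l : L} (hl : 0 ≤ l) (x : X) : R₁ (l • x) = l • R₁ x := by
    show R₀ _ = l • R₀ x
    rw [hR₀ (smul_nonneg hl (hA x)) (smul_nonneg hl (hB x)) (by rw [← smul_sub, ← hAB x]),
      hsmul l hl _ (hA x), hsmul l hl _ (hB x), smul_sub]
  refine ⟨{ toFun := R₁, map_add' := R₁.map_add, map_smul' := fun l x => ?_ }, fun x hx => ?_⟩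
  · conv_lhs => rw [← posPart_sub_negPart l, sub_smul]
    rw [map_sub, hR₁ (posPart_nonneg l), hR₁ (negPart_nonneg l), ← sub_smul,
      posPart_sub_negPart, RingHom.id_apply]
  · show R₀ x = f x
    rw [hR₀ hx le_rfl (sub_zero x).symm, hf0, sub_zero]

theorem orderBounded_of_nonneg {L X Y : Type*} [DFAlgebra L] [POModule L X] [LVectorLattice L Y]
    {R : X →ₗ[L] Y} (hR : ∀ x, 0 ≤ x → 0 ≤ R x) : OrderBounded L X Y R := fun a b =>
  ⟨R a, R b, fun z haz hzb => ⟨sub_nonneg.1 (by simpa using hR _ (sub_nonneg.2 haz)),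
    sub_nonneg.1 (by simpa using hR _ (sub_nonneg.2 hzb))⟩⟩

/-- Riesz–Kantorovich: existence of S⁺ = S ∨ 0 in L_b(X,Y) together with the
formula S⁺(x) = sup { S y : 0 ≤ y ≤ x }. -/
theorem stmt15 (L X Y : Type*) [DFAlgebra L] [POModule L X] [LVectorLattice L Y]
    (hXdir : ∀ x : X, ∃ a b : X, 0 ≤ a ∧ 0 ≤ b ∧ x = a - b)
    (hRDP : ∀ x y : X, 0 ≤ x → 0 ≤ y →
      Set.Icc (0 : X) (x + y) = Set.Icc (0 : X) x + Set.Icc (0 : X) y)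
    (hYded : ∀ S : Set Y, S.Nonempty → BddAbove S → ∃ a : Y, IsLUB S a)
    (hYParch : ∀ π : ℕ → L, (∀ n, π n * π n = π n) → Antitone π →
      IsGLB (Set.range π) 0 → ∀ y : Y, 0 ≤ y → IsGLB (Set.range fun n => π n • y) 0)
    (S : X →ₗ[L] Y) (hS : OrderBounded L X Y S) :
    ∃ R : Lb L X Y, IsLUB {(⟨S, hS⟩ : Lb L X Y), 0} R ∧
      ∀ x : X, 0 ≤ x → IsLUB (S '' Set.Icc (0 : X) x) (R.1 x) := by
  obtain ⟨p, hp⟩ := exists_isIntervalSup hYded hS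
  obtain ⟨R, hR⟩ := exists_linearMap_eq_of_nonneg hXdir (fun x y hx hy => hp.map_add hRDP hx hy)
    (fun l hl x hx => hp.map_smul hRDP hYded hYParch hl hx)
  have hR_nonneg (x : X) (hx : 0 ≤ x) : 0 ≤ R x := hR x hx ▸ hp.nonneg_s15 hx
  refine ⟨⟨R, orderBounded_of_nonneg hR_nonneg⟩, ⟨?_, fun T hT x hx => ?_⟩,
    fun x hx => (hR x hx).symm ▸ hp x hx⟩
  · rintro T (rfl | rfl) x hx
    · exact (hR x hx).symm ▸ (hp x hx).1 (mem_image_of_mem S ⟨hx, le_rfl⟩)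
    · exact hR_nonneg x hx
  · exact (hR x hx).symm ▸ hp.le_apply (hT (mem_insert _ _)) (hT (mem_insert_of_mem _ rfl)) hx
end
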